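/- arXiv:1112.6020 — 3 statements merged into one kernel-verified Lean document; each statement's English description precedes it below -/
import Mathlib

section
/- Let Θ be a finite group and X a finitely generated ℤ-free Θ-module (a Θ-lattice). Then the group cohomology H^1(Θ, X^∨), where X^∨ = Hom_ℤ(X, ℤ) with the contragredient Θ-action, is isomorphic to the Pontryagin dual Hom(Ĥ^{-1}(Θ, X), ℚ/ℤ) of the Tate cohomology group Ĥ^{-1}(Θ, X). -/
/-!
STATEMENT 4: for a finite group Θ and a Θ-lattice X (finitely generated ℤ-free),
H¹(Θ, X^∨) ≅ Hom(Ĥ^{-1}(Θ, X), ℚ/ℤ), where X^∨ = Hom_ℤ(X, ℤ) with the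
contragredient action (θ·f)(x) = f(θ⁻¹·x), and ℚ/ℤ is AddCircle (1 : ℚ).
-/

open scoped BigOperators

variable {Θ : Type*} [Group Θ]

/-- The contragredient action of Θ on X^∨ = Hom_ℤ(X, ℤ): (θ·f)(x) = f(θ⁻¹·x). -/
instance contragredient (X : Type*) [AddCommGroup X] [DistribMulAction Θ X] :
    DistribMulAction Θ (X →+ ℤ) where
  smul θ f := f.comp (DistribMulAction.toAddMonoidHom X θ⁻¹)
  one_smul f := by
    ext x
    show f ((1 : Θ)⁻¹ • x) = f x
    simp
  mul_smul a b f := by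
    ext x
    show f ((a * b)⁻¹ • x) = f (b⁻¹ • a⁻¹ • x)
    rw [mul_inv_rev, mul_smul]
  smul_zero θ := rfl
  smul_add θ f g := rfl

/-- The group of 1-cocycles of Θ with values in a Θ-module D. -/
def oneCocycles (Θ : Type*) [Group Θ] (D : Type*) [AddCommGroup D]
    [DistribMulAction Θ D] : AddSubgroup (Θ → D) where
  carrier := {f | ∀ a b : Θ, f (a * b) = f a + a • f b}
  zero_mem' := by intro a b; simp
  add_mem' := by
    intro f g hf hg a b
    simp only [Pi.add_apply, hf a b, hg a b, smul_add]
    abel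
  neg_mem' := by
    intro f hf a b
    simp only [Pi.neg_apply, hf a b, smul_neg]
    abel

/-- The coboundary homomorphism D → (Θ → D), c ↦ (a ↦ a•c − c). -/
def coboundaryHom (Θ : Type*) [Group Θ] (D : Type*) [AddCommGroup D]
    [DistribMulAction Θ D] : D →+ (Θ → D) where
  toFun c := fun a => a • c - c
  map_zero' := by ext a; simp
  map_add' c d := by
    ext a
    simp only [smul_add, Pi.add_apply]
    abel

/-- H¹(Θ, D) = cocycles / coboundaries. -/
def H1 (Θ : Type*) [Group Θ] (D : Type*) [AddCommGroup D] [DistribMulAction Θ D] : Type _ :=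
  oneCocycles Θ D ⧸ ((coboundaryHom Θ D).range.addSubgroupOf (oneCocycles Θ D))

noncomputable instance (Θ : Type*) [Group Θ] (D : Type*) [AddCommGroup D]
    [DistribMulAction Θ D] : AddCommGroup (H1 Θ D) :=
  inferInstanceAs (AddCommGroup
    (oneCocycles Θ D ⧸ ((coboundaryHom Θ D).range.addSubgroupOf (oneCocycles Θ D))))

/-- The norm map x ↦ ∑_{θ∈Θ} θ•x as an additive homomorphism. -/
def normMap (Θ : Type*) [Group Θ] [Fintype Θ] (X : Type*) [AddCommGroup X]
    [DistribMulAction Θ X] : X →+ X where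
  toFun x := ∑ θ : Θ, θ • x
  map_zero' := by simp
  map_add' x y := by simp [smul_add, Finset.sum_add_distrib]

/-- The augmentation subgroup I_Θ X, generated by the elements θ•y − y. -/
def augmentationSubgroup (Θ : Type*) [Group Θ] (X : Type*) [AddCommGroup X]
    [DistribMulAction Θ X] : AddSubgroup X :=
  AddSubgroup.closure {z : X | ∃ (θ : Θ) (y : X), z = θ • y - y}

/-- Ĥ^{-1}(Θ, X) = ker(N_Θ) / I_Θ X. -/
def TateHminusOne (Θ : Type*) [Group Θ] [Fintype Θ] (X : Type*) [AddCommGroup X]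
    [DistribMulAction Θ X] : Type _ :=
  (normMap Θ X).ker ⧸ ((augmentationSubgroup Θ X).addSubgroupOf (normMap Θ X).ker)

noncomputable instance (Θ : Type*) [Group Θ] [Fintype Θ] (X : Type*) [AddCommGroup X]
    [DistribMulAction Θ X] : AddCommGroup (TateHminusOne Θ X) :=
  inferInstanceAs (AddCommGroup
    ((normMap Θ X).ker ⧸ ((augmentationSubgroup Θ X).addSubgroupOf (normMap Θ X).ker)))

/-!
The pairing sends a cocycle `f : Θ → X^∨` and `x ∈ ker N` to `F x / |Θ|` modulo `ℤ`, where
`F = ∑ θ, f θ`. The cocycle identity gives `|Θ| • f a = F - a • F`, so `F` is divisible by `|Θ|`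
on `I_Θ X`; for the coboundary of `c`, `F = N c - |Θ| • c`, which is divisible by `|Θ|` on `ker N`.

Injectivity: if `F` is divisible by `|Θ|` on `ker N`, a section of `N` over its (free) image
splits `F = G + |Θ| • c` with `G` factoring through `N`, hence `Θ`-invariant, and then `f` is the
coboundary of `-c`.

Surjectivity: a character of `Ĥ^{-1}(Θ, X) ⊆ X / I_Θ X` extends, `ℚ/ℤ` being injective, to a
character of `X` killing `I_Θ X`; as `X` is free it lifts to `g : X → ℚ`, and `a ↦ g - a • g` is an
integral cocycle with `F = |Θ| • g` on `ker N`.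
-/

local notation "ℚ/ℤ" => AddCircle (1 : ℚ)

noncomputable def intDivModOne (n : ℕ) : ℤ →+ ℚ/ℤ :=
  (QuotientAddGroup.mk' _).comp ((AddMonoidHom.mulRight (n⁻¹ : ℚ)).comp (Int.castAddHom ℚ))

theorem intDivModOne_apply (n : ℕ) (m : ℤ) : intDivModOne n m = ((m / n : ℚ) : ℚ/ℤ) := rfl

theorem intDivModOne_eq_zero_iff {n : ℕ} (hn : n ≠ 0) {m : ℤ} :
    intDivModOne n m = 0 ↔ (n : ℤ) ∣ m := by
  rw [intDivModOne_apply, AddCircle.coe_eq_zero_iff, dvd_iff_exists_eq_mul_right]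
  refine exists_congr fun k => ?_
  rw [zsmul_eq_mul, mul_one, eq_div_iff (by exact_mod_cast hn), eq_comm, mul_comm]
  exact_mod_cast Iff.rfl

theorem AddMonoidHom.exists_comp_eq_of_forall_mem_range {X A B : Type*} [AddGroup X] [AddGroup A]
    [AddGroup B] {ι : A →+ B} (hι : Function.Injective ι) (φ : X →+ B)
    (hφ : ∀ x, φ x ∈ ι.range) : ∃ c : X →+ A, ι.comp c = φ :=
  ⟨((AddMonoidHom.ofInjective hι).symm : ι.range →+ A).comp (φ.codRestrict ι.range hφ), by
    ext x
    exact congrArg Subtype.val ((AddMonoidHom.ofInjective hι).apply_symm_apply _)⟩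

theorem exists_eq_add_mul_of_dvd_of_mem_ker {X Y : Type*} [AddCommGroup X] [AddCommGroup Y]
    [Module.Free ℤ Y] [Module.Finite ℤ Y] (N : X →+ Y) (F : X →+ ℤ) {n : ℤ} (hn : n ≠ 0)
    (hF : ∀ x ∈ N.ker, n ∣ F x) :
    ∃ G c : X →+ ℤ, N.ker ≤ G.ker ∧ ∀ x, F x = G x + n * c x := by
  -- `N` has a section over its image, which is free as a submodule of a lattice.
  let r := N.toIntLinearMap.rangeRestrict
  obtain ⟨s, hs⟩ := Module.projective_lifting_property r LinearMap.id
    N.toIntLinearMap.surjective_rangeRestrict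
  let G : X →+ ℤ := F.comp (s.comp r).toAddMonoidHom
  have hsr : ∀ x, x - s (r x) ∈ N.ker := fun x => by
    have : N (s (r x)) = N x := congrArg Subtype.val (LinearMap.congr_fun hs (r x))
    rw [AddMonoidHom.mem_ker, map_sub, this, sub_self]
  obtain ⟨c, hc⟩ := AddMonoidHom.exists_comp_eq_of_forall_mem_range
    (ι := AddMonoidHom.mulLeft n) (mul_right_injective₀ hn) (F - G) fun x => by
      obtain ⟨k, hk⟩ := hF _ (hsr x)
      exact ⟨k, hk.symm.trans (map_sub F _ _)⟩
  refine ⟨G, c, fun x hx => ?_, fun x => ?_⟩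
  · have : r x = 0 := Subtype.ext hx
    change F (s (r x)) = 0
    rw [this, map_zero, map_zero]
  · have := DFunLike.congr_fun hc x
    simp only [AddMonoidHom.comp_apply, AddMonoidHom.sub_apply, AddMonoidHom.coe_mulLeft] at this
    rw [this, add_sub_cancel]

theorem exists_rat_lift_of_free {X : Type*} [AddCommGroup X] [Module.Free ℤ X] (Ψ : X →+ ℚ/ℤ) :
    ∃ g : X →+ ℚ, ∀ x, (g x : ℚ/ℤ) = Ψ x := by
  obtain ⟨g, hg⟩ := Module.projective_lifting_property
    (QuotientAddGroup.mk' (AddSubgroup.zmultiples (1 : ℚ))).toIntLinearMap Ψ.toIntLinearMap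
    (QuotientAddGroup.mk'_surjective _)
  exact ⟨g.toAddMonoidHom, LinearMap.congr_fun hg⟩

theorem exists_character_extension_of_addSubgroupOf {G : Type*} [AddCommGroup G]
    (H K : AddSubgroup G) (χ : K ⧸ H.addSubgroupOf K →+ ℚ/ℤ) :
    ∃ Ψ : G →+ ℚ/ℤ, H ≤ Ψ.ker ∧ ∀ x : K, Ψ x = χ x := by
  let ι := QuotientAddGroup.map (H.addSubgroupOf K) H K.subtype (AddSubgroup.comap_subtype H K).ge
  have hι : Function.Injective ι := by
    rw [injective_iff_map_eq_zero]
    rintro ⟨x⟩ hx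
    exact (QuotientAddGroup.eq_zero_iff _).2
      (AddSubgroup.mem_addSubgroupOf.2 ((QuotientAddGroup.eq_zero_iff _).1 hx))
  obtain ⟨Ψ, hΨ⟩ := CharacterModule.dual_surjective_of_injective ι.toIntLinearMap hι χ
  refine ⟨Ψ.comp (QuotientAddGroup.mk' H), fun x hx => ?_, fun x => ?_⟩
  · change Ψ (x : G ⧸ H) = 0
    rw [(QuotientAddGroup.eq_zero_iff x).2 hx, map_zero]
  · rw [← hΨ]
    rfl

section Cohomology

variable [Fintype Θ] {D : Type*} [AddCommGroup D] [DistribMulAction Θ D]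

theorem card_smul_eq_sum_sub_smul_sum {f : Θ → D} (hf : f ∈ oneCocycles Θ D) (a : Θ) :
    Fintype.card Θ • f a = ∑ θ, f θ - a • ∑ θ, f θ := by
  have hsmul : ∀ θ, a • f θ = f (a * θ) - f a := fun θ => by
    rw [hf a θ, add_sub_cancel_left]
  have hreindex : ∑ θ, f (a * θ) = ∑ θ, f θ := Equiv.sum_comp (Equiv.mulLeft a) f
  rw [Finset.smul_sum, Fintype.sum_congr _ _ hsmul, Finset.sum_sub_distrib, hreindex,
    Finset.sum_const, Finset.card_univ, sub_sub_cancel]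

theorem sum_coboundaryHom (c : D) :
    ∑ θ, coboundaryHom Θ D c θ = normMap Θ D c - Fintype.card Θ • c := by
  simp only [coboundaryHom, AddMonoidHom.coe_mk, ZeroHom.coe_mk, Finset.sum_sub_distrib,
    Finset.sum_const, Finset.card_univ]
  rfl

theorem sum_inv_smul (x : D) : ∑ θ : Θ, θ⁻¹ • x = normMap Θ D x :=
  Equiv.sum_comp (Equiv.inv Θ) (· • x)

theorem normMap_smul (a : Θ) (x : D) : normMap Θ D (a • x) = normMap Θ D x := by
  change ∑ θ : Θ, θ • a • x = ∑ θ : Θ, θ • x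
  simp_rw [← mul_smul]
  exact Equiv.sum_comp (Equiv.mulRight a) (· • x)

end Cohomology

section Dual

variable {X : Type*} [AddCommGroup X] [DistribMulAction Θ X]

@[simp]
theorem contragredient_smul_apply (a : Θ) (c : X →+ ℤ) (x : X) : (a • c) x = c (a⁻¹ • x) := rfl

theorem exists_mem_oneCocycles_of_integral_coboundary (g : X →+ ℚ)
    (hg : ∀ z ∈ augmentationSubgroup Θ X, (g z : ℚ/ℤ) = 0) :
    ∃ f ∈ oneCocycles Θ (X →+ ℤ), ∀ a x, (f a x : ℚ) = g x - g (a⁻¹ • x) := by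
  have hint (a : Θ) : ∃ fa : X →+ ℤ,
      (Int.castAddHom ℚ).comp fa = g - g.comp (DistribSMul.toAddMonoidHom X a⁻¹) := by
    refine AddMonoidHom.exists_comp_eq_of_forall_mem_range Int.cast_injective _ fun x => ?_
    have hmem : x - a⁻¹ • x ∈ augmentationSubgroup Θ X := by
      rw [← neg_sub]
      exact neg_mem (AddSubgroup.subset_closure ⟨a⁻¹, x, rfl⟩)
    obtain ⟨k, hk⟩ := (AddCircle.coe_eq_zero_iff 1).1 (hg _ hmem)
    exact ⟨k, by simpa using hk⟩
  choose f hf using hint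
  have hval (a : Θ) (x : X) : (f a x : ℚ) = g x - g (a⁻¹ • x) := DFunLike.congr_fun (hf a) x
  refine ⟨f, fun a b => ?_, hval⟩
  ext x
  apply Int.cast_injective (α := ℚ)
  simp only [AddMonoidHom.add_apply, contragredient_smul_apply, Int.cast_add, hval, mul_inv_rev,
    mul_smul]
  ring

variable [Fintype Θ]

@[ext]
theorem TateHminusOne.addMonoidHom_ext {A : Type*} [AddMonoid A] {φ ψ : TateHminusOne Θ X →+ A}
    (h : ∀ x : (normMap Θ X).ker, φ (QuotientAddGroup.mk x) = ψ (QuotientAddGroup.mk x)) :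
    φ = ψ :=
  QuotientAddGroup.addMonoidHom_ext _ (AddMonoidHom.ext h)

theorem normMap_dual_apply (c : X →+ ℤ) (x : X) :
    normMap Θ (X →+ ℤ) c x = c (normMap Θ X x) := by
  change (∑ θ : Θ, θ • c) x = c (normMap Θ X x)
  simp only [AddMonoidHom.finsetSum_apply, contragredient_smul_apply, ← map_sum, sum_inv_smul]

theorem sum_coboundaryHom_apply_of_mem_ker (c : X →+ ℤ) {x : X} (hx : x ∈ (normMap Θ X).ker) :
    (∑ θ, coboundaryHom Θ (X →+ ℤ) c θ) x = -(Fintype.card Θ * c x) := by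
  rw [sum_coboundaryHom, AddMonoidHom.sub_apply, normMap_dual_apply, hx, map_zero,
    AddMonoidHom.nsmul_apply, nsmul_eq_mul, zero_sub]

theorem card_dvd_sum_apply_of_mem_augmentationSubgroup {f : Θ → (X →+ ℤ)}
    (hf : f ∈ oneCocycles Θ (X →+ ℤ)) {z : X} (hz : z ∈ augmentationSubgroup Θ X) :
    (Fintype.card Θ : ℤ) ∣ (∑ θ, f θ) z := by
  suffices augmentationSubgroup Θ X ≤
      (AddSubgroup.zmultiples (Fintype.card Θ : ℤ)).comap (∑ θ, f θ) from
    Int.mem_zmultiples_iff.1 (this hz)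
  refine (AddSubgroup.closure_le _).2 ?_
  rintro _ ⟨θ, y, rfl⟩
  have h := DFunLike.congr_fun (card_smul_eq_sum_sub_smul_sum hf θ) (θ • y)
  rw [AddMonoidHom.nsmul_apply, AddMonoidHom.sub_apply, contragredient_smul_apply,
    inv_smul_smul, nsmul_eq_mul] at h
  exact Int.mem_zmultiples_iff.2 ⟨f θ (θ • y), by rw [map_sub, h]⟩

noncomputable def cocyclePairing : oneCocycles Θ (X →+ ℤ) →+ (TateHminusOne Θ X →+ ℚ/ℤ) where
  toFun f := QuotientAddGroup.lift _
    ((intDivModOne (Fintype.card Θ)).comp ((∑ θ, f.1 θ).comp (normMap Θ X).ker.subtype))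
    fun _ hx => (intDivModOne_eq_zero_iff Fintype.card_ne_zero).2
      (card_dvd_sum_apply_of_mem_augmentationSubgroup f.2 (AddSubgroup.mem_addSubgroupOf.1 hx))
  map_zero' := by
    ext x
    exact (congrArg (intDivModOne _) (by simp)).trans (map_zero _)
  map_add' f g := by
    ext x
    exact (congrArg (intDivModOne _) (by simp [Finset.sum_add_distrib])).trans (map_add _ _ _)

noncomputable def tatePairing : H1 Θ (X →+ ℤ) →+ (TateHminusOne Θ X →+ ℚ/ℤ) :=
  QuotientAddGroup.lift _ cocyclePairing fun f ⟨c, hc⟩ => by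
    ext x
    change intDivModOne _ ((∑ θ, f.1 θ) x) = 0
    rw [← show coboundaryHom Θ _ c = f.1 from hc, sum_coboundaryHom_apply_of_mem_ker c x.2,
      intDivModOne_eq_zero_iff Fintype.card_ne_zero, dvd_neg]
    exact dvd_mul_right _ _

theorem tatePairing_mk_mk (f : oneCocycles Θ (X →+ ℤ)) (x : (normMap Θ X).ker) :
    tatePairing (QuotientAddGroup.mk f : H1 Θ (X →+ ℤ)) (QuotientAddGroup.mk x) =
      intDivModOne (Fintype.card Θ) ((∑ θ, f.1 θ) x) :=
  rfl

theorem coboundaryHom_neg_eq_of_sum_eq {f : Θ → (X →+ ℤ)} (hf : f ∈ oneCocycles Θ (X →+ ℤ))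
    {G c : X →+ ℤ} (hG : (normMap Θ X).ker ≤ G.ker)
    (hF : ∀ x, (∑ θ, f θ) x = G x + Fintype.card Θ * c x) :
    coboundaryHom Θ (X →+ ℤ) (-c) = f := by
  funext a
  ext x
  have hcard : (Fintype.card Θ : ℤ) ≠ 0 := by exact_mod_cast Fintype.card_ne_zero
  have hkey := DFunLike.congr_fun (card_smul_eq_sum_sub_smul_sum hf a) x
  rw [AddMonoidHom.nsmul_apply, AddMonoidHom.sub_apply, contragredient_smul_apply,
    nsmul_eq_mul] at hkey
  have hGinv : G (a⁻¹ • x) = G x := by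
    have : a⁻¹ • x - x ∈ (normMap Θ X).ker := by
      rw [AddMonoidHom.mem_ker, map_sub, normMap_smul, sub_self]
    rw [← sub_eq_zero, ← map_sub]
    exact hG this
  refine mul_left_cancel₀ hcard ?_
  change _ * ((a • -c) x - (-c) x) = _
  rw [hkey, hF, hF, hGinv, contragredient_smul_apply]
  simp only [AddMonoidHom.neg_apply]
  ring

theorem tatePairing_injective [Module.Free ℤ X] [Module.Finite ℤ X] :
    Function.Injective (tatePairing : H1 Θ (X →+ ℤ) →+ (TateHminusOne Θ X →+ ℚ/ℤ)) := by
  rw [injective_iff_map_eq_zero]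
  rintro ⟨f⟩ hf
  have hdvd : ∀ x ∈ (normMap Θ X).ker, (Fintype.card Θ : ℤ) ∣ (∑ θ, f.1 θ) x := fun x hx =>
    (intDivModOne_eq_zero_iff Fintype.card_ne_zero).1
      (DFunLike.congr_fun hf (QuotientAddGroup.mk ⟨x, hx⟩ : TateHminusOne Θ X))
  obtain ⟨G, c, hG, hF⟩ := exists_eq_add_mul_of_dvd_of_mem_ker (normMap Θ X) _
    (by exact_mod_cast Fintype.card_ne_zero) hdvd
  exact (QuotientAddGroup.eq_zero_iff f).2
    (AddSubgroup.mem_addSubgroupOf.2 ⟨-c, coboundaryHom_neg_eq_of_sum_eq f.2 hG hF⟩)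

theorem tatePairing_surjective [Module.Free ℤ X] :
    Function.Surjective (tatePairing : H1 Θ (X →+ ℤ) →+ (TateHminusOne Θ X →+ ℚ/ℤ)) := by
  intro χ
  obtain ⟨Ψ, hΨI, hΨχ⟩ :=
    exists_character_extension_of_addSubgroupOf (augmentationSubgroup Θ X) (normMap Θ X).ker χ
  obtain ⟨g, hg⟩ := exists_rat_lift_of_free Ψ
  obtain ⟨f, hf, hval⟩ := exists_mem_oneCocycles_of_integral_coboundary g fun z hz => (hg z).trans (hΨI hz)
  refine ⟨QuotientAddGroup.mk ⟨f, hf⟩, ?_⟩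
  ext x
  have hsum : ((∑ θ, f θ) x : ℚ) = Fintype.card Θ * g x := by
    simp_rw [AddMonoidHom.finsetSum_apply, Int.cast_sum, hval]
    rw [Finset.sum_sub_distrib, ← map_sum g (·⁻¹ • (x : X)), sum_inv_smul,
      AddMonoidHom.mem_ker.1 x.2, map_zero, sub_zero, Finset.sum_const, Finset.card_univ,
      nsmul_eq_mul]
  rw [tatePairing_mk_mk, intDivModOne_apply, hsum,
    mul_div_cancel_left₀ _ (by exact_mod_cast Fintype.card_ne_zero), hg, hΨχ]
  rfl

end Dual

theorem h1_dual_iso_pontryagin_dual_of_tate (Θ : Type) [Group Θ] [Fintype Θ]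
    (X : Type) [AddCommGroup X] [DistribMulAction Θ X]
    (hfree : Module.Free ℤ X) (hfg : Module.Finite ℤ X) :
    Nonempty (H1 Θ (X →+ ℤ) ≃+ (TateHminusOne Θ X →+ AddCircle (1 : ℚ))) :=
  ⟨AddEquiv.ofBijective tatePairing ⟨tatePairing_injective, tatePairing_surjective⟩⟩
end

section
/- Let f : A → B and f' : A' → B' be homomorphisms of abelian groups. Suppose there is an isomorphism φ : A ⊕ B' → A' ⊕ B such that (f' ⊕ id_B) ∘ φ = σ ∘ (f ⊕ id_{B'}), where σ : B ⊕ B' → B' ⊕ B is the swap isomorphism. Then coker f ≅ coker f'. -/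
/-!
Adding an identity summand does not change the cokernel, and a commuting square whose
horizontal sides are isomorphisms identifies the cokernels of its vertical sides. Hence
coker f ≅ coker (f ⊕ id_{B'}) ≅ coker (f' ⊕ id_B) ≅ coker f'.
-/

namespace AddMonoidHom

variable {A B C : Type*} [AddCommGroup A] [AddCommGroup B] [AddCommGroup C]

theorem ker_mk'_comp_fst (f : A →+ B) :
    ((QuotientAddGroup.mk' f.range).comp (fst B C)).ker = (f.prodMap (id C)).range := by
  ext ⟨b, c⟩
  simp [AddSubgroup.mem_prod]

noncomputable def cokerProdMapIdEquiv (f : A →+ B) :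
    (B × C) ⧸ (f.prodMap (id C)).range ≃+ B ⧸ f.range :=
  (QuotientAddGroup.quotientAddEquivOfEq (ker_mk'_comp_fst f).symm).trans <|
    QuotientAddGroup.quotientKerEquivOfSurjective _ <|
      (QuotientAddGroup.mk'_surjective _).comp Prod.fst_surjective

variable {X X' Y Y' : Type*} [AddCommGroup X] [AddCommGroup X'] [AddCommGroup Y]
  [AddCommGroup Y']

theorem map_range_eq_of_comp_eq {g : X →+ Y} {g' : X' →+ Y'} {φ : X ≃+ X'} {ψ : Y ≃+ Y'}
    (h : g'.comp φ.toAddMonoidHom = ψ.toAddMonoidHom.comp g) :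
    g.range.map ψ.toAddMonoidHom = g'.range := by
  rw [map_range, ← h, range_comp, φ.toAddMonoidHom.range_eq_top_of_surjective φ.surjective,
    ← range_eq_map]

noncomputable def cokerCongr {g : X →+ Y} {g' : X' →+ Y'} {φ : X ≃+ X'} {ψ : Y ≃+ Y'}
    (h : g'.comp φ.toAddMonoidHom = ψ.toAddMonoidHom.comp g) :
    Y ⧸ g.range ≃+ Y' ⧸ g'.range :=
  QuotientAddGroup.congr _ _ ψ (map_range_eq_of_comp_eq h)

end AddMonoidHom

theorem coker_iso_of_stable_iso {A B A' B' : Type} [AddCommGroup A] [AddCommGroup B]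
    [AddCommGroup A'] [AddCommGroup B'] (f : A →+ B) (f' : A' →+ B')
    (φ : A × B' ≃+ A' × B)
    (hφ : ∀ p : A × B',
      (f'.prodMap (AddMonoidHom.id B)) (φ p) =
        (AddEquiv.prodComm : B × B' ≃+ B' × B) ((f.prodMap (AddMonoidHom.id B')) p)) :
    Nonempty ((B ⧸ f.range) ≃+ (B' ⧸ f'.range)) :=
  ⟨f.cokerProdMapIdEquiv.symm.trans <|
    (AddMonoidHom.cokerCongr (φ := φ) (ψ := AddEquiv.prodComm)
      (AddMonoidHom.ext hφ)).trans f'.cokerProdMapIdEquiv⟩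
end

section
/- Let 1 → F → E →^π H → 1 be a central extension of groups. Assume that the commutator subgroup [E,E] intersects F trivially and that π([E,E]) = [H,H]. Then the natural homomorphism E → (E/[E,E]) ×_{H/[H,H]} H, e ↦ (e·[E,E], π(e)), is an isomorphism of groups, where the fiber product is taken over the maps E/[E,E] → H/[H,H] (induced by π) and H → H/[H,H] (the quotient map). -/
/-!
The natural map `e ↦ (e·[E,E], π e)` has kernel `[E,E] ∩ ker π`, which is trivial. It is onto the
fiber product because a pair `(e·[E,E], h)` in it has `h⁻¹ · π e ∈ [H,H] = π([E,E])`, say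
`= π c`, and then `e c⁻¹` is a preimage.
-/

/-- The fiber product (E/[E,E]) ×_{H/[H,H]} H as a subgroup of Abelianization E × H. -/
def abelianizationFiberProduct {E H : Type} [Group E] [Group H] (π : E →* H) :
    Subgroup (Abelianization E × H) :=
  ((Abelianization.map π).comp (MonoidHom.fst (Abelianization E) H)).eqLocus
    ((Abelianization.of).comp (MonoidHom.snd (Abelianization E) H))

section

variable {E H : Type} [Group E] [Group H] (π : E →* H)

theorem mem_abelianizationFiberProduct {x : Abelianization E × H} :
    x ∈ abelianizationFiberProduct π ↔ Abelianization.map π x.1 = Abelianization.of x.2 :=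
  Iff.rfl

def toAbelianizationFiberProduct : E →* abelianizationFiberProduct π :=
  (Abelianization.of.prod π).codRestrict _ fun e =>
    (mem_abelianizationFiberProduct π).mpr (Abelianization.map_of π e)

@[simp]
theorem coe_toAbelianizationFiberProduct_apply (e : E) :
    (toAbelianizationFiberProduct π e : Abelianization E × H) = (Abelianization.of e, π e) :=
  rfl

theorem ker_toAbelianizationFiberProduct :
    (toAbelianizationFiberProduct π).ker = commutator E ⊓ π.ker := by
  rw [toAbelianizationFiberProduct, MonoidHom.ker_codRestrict, MonoidHom.ker_prod,
    Abelianization.ker_of]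

theorem toAbelianizationFiberProduct_surjective (himage : commutator H ≤ (commutator E).map π) :
    Function.Surjective (toAbelianizationFiberProduct π) := by
  rintro ⟨⟨a, h⟩, hmem⟩
  obtain ⟨e, rfl⟩ : ∃ e, Abelianization.of e = a := QuotientGroup.mk_surjective a
  have hquot : Abelianization.of (π e) = Abelianization.of h := by
    simpa only [mem_abelianizationFiberProduct, Abelianization.map_of] using hmem
  obtain ⟨c, hc, hπc⟩ : h⁻¹ * π e ∈ (commutator E).map π :=
    himage (QuotientGroup.eq.mp hquot.symm)
  have hc_of : Abelianization.of c = 1 := by rwa [← MonoidHom.mem_ker, Abelianization.ker_of]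
  refine ⟨e * c⁻¹, Subtype.ext (Prod.ext ?_ ?_)⟩
  · simp [hc_of]
  · simp [hπc]

end

theorem central_extension_fiber_product_iso_general {E H : Type} [Group E] [Group H] (π : E →* H)
    (htriv : commutator E ⊓ π.ker = ⊥)
    (himage : (commutator E).map π = commutator H) :
    ∃ ψ : E ≃* abelianizationFiberProduct π,
      ∀ e : E, ((ψ e : Abelianization E × H)) = (Abelianization.of e, π e) := by
  have hinj : Function.Injective (toAbelianizationFiberProduct π) := by
    rw [← MonoidHom.ker_eq_bot_iff, ker_toAbelianizationFiberProduct, htriv]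
  have hsurj := toAbelianizationFiberProduct_surjective π himage.ge
  exact ⟨MulEquiv.ofBijective _ ⟨hinj, hsurj⟩, coe_toAbelianizationFiberProduct_apply π⟩

theorem central_extension_fiber_product_iso {E H : Type} [Group E] [Group H] (π : E →* H)
    (hsurj : Function.Surjective π) (hcent : π.ker ≤ Subgroup.center E)
    (htriv : commutator E ⊓ π.ker = ⊥)
    (himage : (commutator E).map π = commutator H) :
    ∃ ψ : E ≃* abelianizationFiberProduct π,
      ∀ e : E, ((ψ e : Abelianization E × H)) = (Abelianization.of e, π e) :=
  central_extension_fiber_product_iso_general π htriv himage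
end
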